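/- Let W be a cocompact discrete reflection group of a CAT(0) space X with chamber C and Coxeter generating set S. Let T ⊆ S. Then ⋂_{t∈T}(F_t ∩ C̄) = ⋂_{v∈W_T} vC̄: a point of the closed chamber is fixed by every reflection in T if and only if it lies in every W_T-translate of the closed chamber. -/
import Mathlib


open Pointwise

section Geodesics

variable {X : Type*} [MetricSpace X]

/-- `γ` parametrizes a geodesic segment from `x` to `y` (unit speed on `[0, d(x,y)]`). -/
def IsGeodSegment (γ : ℝ → X) (x y : X) : Prop :=
  γ 0 = x ∧ γ (dist x y) = y ∧
    ∀ s ∈ Set.Icc (0 : ℝ) (dist x y), ∀ t ∈ Set.Icc (0 : ℝ) (dist x y),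
      dist (γ s) (γ t) = |s - t|

/-- The geodesic segments (as subsets of `X`) joining `x` to `y`. -/
def GeodSegments (x y : X) : Set (Set X) :=
  {A | ∃ γ : ℝ → X, IsGeodSegment γ x y ∧ A = γ '' Set.Icc (0 : ℝ) (dist x y)}

/-- A set is geodesically convex if it contains every geodesic segment between
any two of its points. -/
def GeodConvex (A : Set X) : Prop :=
  ∀ x ∈ A, ∀ y ∈ A, ∀ G ∈ GeodSegments x y, G ⊆ A

/-- A geodesic space: any two points are joined by a geodesic segment. -/
def GeodesicSpace (X : Type*) [MetricSpace X] : Prop :=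
  ∀ x y : X, ∃ γ : ℝ → X, IsGeodSegment γ x y

/-- CAT(0): a geodesic space satisfying the CN (Bruhat–Tits) inequality for midpoints. -/
def CAT0Space (X : Type*) [MetricSpace X] : Prop :=
  GeodesicSpace X ∧
    ∀ x y z m : X, dist y m = dist y z / 2 → dist z m = dist y z / 2 →
      dist x m ^ 2 ≤ (dist x y ^ 2 + dist x z ^ 2) / 2 - dist y z ^ 2 / 4

/-- A geodesic ray issuing from `x₀`. -/
def IsRayFrom (x₀ : X) (ξ : ℝ → X) : Prop :=
  ξ 0 = x₀ ∧ ∀ s t : ℝ, 0 ≤ s → 0 ≤ t → dist (ξ s) (ξ t) = |s - t|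

end Geodesics

/-- A cocompact discrete reflection group `W` of a geodesic space `X`:
`W` acts properly by isometries, is generated by its set `R` of reflections,
with half-spaces `Xp r`, `Xm r` for each reflection `r`, a chamber `C`
(a connected component of the complement of the walls) with compact closure and
trivial stabilizer, and a minimal subset `S ⊆ R` with `C = ⋂_{s ∈ S} Xp s`
(so that `(W, S)` is a Coxeter system). -/
structure ReflectionGroupSetup (W X : Type*) [Group W] [MetricSpace X] [MulAction W X] where
  isom : ∀ w : W, Isometry (fun x : X => w • x)
  geodesic : GeodesicSpace X
  proper : ∀ (x : X) (N : ℝ), {w : W | dist (w • x) x ≤ N}.Finite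
  R : Set W
  genR : Subgroup.closure R = ⊤
  Xp : W → Set X
  Xm : W → Set X
  C : Set X
  refl_sq : ∀ r ∈ R, r * r = 1
  refl_ne : ∀ r ∈ R, r ≠ (1 : W)
  wall_int : ∀ r ∈ R, interior {x : X | r • x = x} = (∅ : Set X)
  half_convex : ∀ r ∈ R, GeodConvex (Xp r) ∧ GeodConvex (Xm r)
  half_conn : ∀ r ∈ R, IsConnected (Xp r) ∧ IsConnected (Xm r)
  half_disj : ∀ r ∈ R, Disjoint (Xp r) (Xm r)
  half_union : ∀ r ∈ R, Xp r ∪ Xm r = {x : X | r • x = x}ᶜ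
  half_comp : ∀ r ∈ R, ∀ x ∈ ({x : X | r • x = x}ᶜ : Set X),
      connectedComponentIn ({x : X | r • x = x}ᶜ) x = Xp r ∨
      connectedComponentIn ({x : X | r • x = x}ᶜ) x = Xm r
  refl_swap : ∀ r ∈ R, r • Xp r = Xm r
  chamber_sub : ∀ r ∈ R, C ⊆ Xp r
  chamber_ne : C.Nonempty
  chamber : ∀ x ∈ C, C = connectedComponentIn ((⋃ r ∈ R, {y : X | r • y = y})ᶜ) x
  cocompact : IsCompact (closure C)
  stab_trivial : ∀ w : W, w • C = C → w = 1
  S : Set W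
  S_sub : S ⊆ R
  S_fin : S.Finite
  chamber_eq : C = ⋂ s ∈ S, Xp s
  S_min : ∀ s₀ ∈ S, C ≠ ⋂ s ∈ (S \ {s₀}), Xp s

/-- Word length of `w` with respect to the generating set `S`
(the length function of the Coxeter system `(W, S)`). -/
noncomputable def wordLength {W : Type*} [Group W] (S : Set W) (w : W) : ℕ :=
  sInf {n | ∃ l : List W, (∀ x ∈ l, x ∈ S) ∧ l.length = n ∧ l.prod = w}

/-- The geodesic ray `ξ` from `x₀` represents a point of the limit set of `Γ`:
orbit points enter every cone-topology neighbourhood of the endpoint of `ξ`. -/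
def InLimitSet {W X : Type*} [Group W] [MetricSpace X] [MulAction W X]
    (Γ : Set W) (x₀ : X) (ξ : ℝ → X) : Prop :=
  IsRayFrom x₀ ξ ∧ ∀ ε > (0 : ℝ), ∀ T > (0 : ℝ), ∃ γ ∈ Γ,
    T ≤ dist x₀ (γ • x₀) ∧
    ∃ σ : ℝ → X, IsGeodSegment σ x₀ (γ • x₀) ∧ dist (σ T) (ξ T) < ε

/-- A geodesic space is locally connected: balls are preconnected. -/
lemma GeodesicSpace.locallyConnectedSpace {X : Type*} [MetricSpace X]
    (h : GeodesicSpace X) : LocallyConnectedSpace X := by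
  refine locallyConnectedSpace_of_connected_bases (fun x r => Metric.ball x r)
    (fun _ r => 0 < r) (fun x => Metric.nhds_basis_ball) (fun x r hr => ?_)
  refine isPreconnected_of_forall x (fun y hy => ?_)
  obtain ⟨γ, hγ0, hγd, hγ⟩ := h x y
  have hd : (0 : ℝ) ≤ dist x y := dist_nonneg
  refine ⟨γ '' Set.Icc 0 (dist x y), ?_, ?_, ?_, ?_⟩
  · rintro _ ⟨s, hs, rfl⟩
    have : dist (γ 0) (γ s) = |0 - s| := hγ 0 ⟨le_refl _, hd⟩ s hs
    rw [hγ0] at this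
    have : dist x (γ s) = s := by rw [this]; rw [abs_sub_comm, sub_zero, abs_of_nonneg hs.1]
    rw [Metric.mem_ball, dist_comm, this]
    exact lt_of_le_of_lt hs.2 (Metric.mem_ball'.mp hy)
  · exact ⟨0, ⟨le_refl _, hd⟩, hγ0⟩
  · exact ⟨dist x y, ⟨hd, le_refl _⟩, hγd⟩
  · refine isPreconnected_Icc.image γ ?_
    refine LipschitzOnWith.continuousOn (K := 1) ?_
    refine LipschitzOnWith.of_dist_le_mul (fun s hs t ht => ?_)
    rw [hγ s hs t ht, Real.dist_eq]
    simp

/-- The two open half-spaces of a reflection `r` are open. -/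
lemma ReflectionGroupSetup.halves_open {W X : Type*} [Group W] [MetricSpace X]
    [MulAction W X] (st : ReflectionGroupSetup W X) {r : W} (hr : r ∈ st.R) :
    IsOpen (st.Xp r) ∧ IsOpen (st.Xm r) := by
  haveI := st.geodesic.locallyConnectedSpace
  have hwall : IsClosed {x : X | r • x = x} :=
    isClosed_eq ((st.isom r).continuous) continuous_id
  have hopen : IsOpen ({x : X | r • x = x}ᶜ : Set X) := hwall.isOpen_compl
  have hsub : st.Xp r ⊆ ({x : X | r • x = x}ᶜ : Set X) := by
    rw [← st.half_union r hr]; exact Set.subset_union_left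
  have hsubm : st.Xm r ⊆ ({x : X | r • x = x}ᶜ : Set X) := by
    rw [← st.half_union r hr]; exact Set.subset_union_right
  constructor
  · obtain ⟨x, hx⟩ := st.chamber_ne
    have hxp : x ∈ st.Xp r := st.chamber_sub r hr hx
    rcases st.half_comp r hr x (hsub hxp) with hc | hc
    · rw [← hc]; exact hopen.connectedComponentIn
    · exfalso
      have : x ∈ st.Xm r := by rw [← hc]; exact mem_connectedComponentIn (hsub hxp)
      exact (st.half_disj r hr).ne_of_mem hxp this rfl
  · obtain ⟨x, hx⟩ := st.chamber_ne
    have hxp : x ∈ st.Xp r := st.chamber_sub r hr hx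
    have hxm : r • x ∈ st.Xm r := by
      rw [← st.refl_swap r hr]; exact Set.smul_mem_smul_set hxp
    rcases st.half_comp r hr (r • x) (hsubm hxm) with hc | hc
    · exfalso
      have : r • x ∈ st.Xp r := by rw [← hc]; exact mem_connectedComponentIn (hsubm hxm)
      exact (st.half_disj r hr).ne_of_mem this hxm rfl
    · rw [← hc]; exact hopen.connectedComponentIn

/-- For `T ⊆ S`, a point of the closed chamber is fixed by every
reflection in `T` iff it lies in every `W_T`-translate of the closed chamber. -/
theorem stmt12 {W X : Type*} [Group W] [MetricSpace X] [MulAction W X]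
    (st : ReflectionGroupSetup W X) (hX : CAT0Space X)
    (T : Set W) (hT : T ⊆ st.S)
    (y : X) (hy : y ∈ closure st.C) :
    (∀ t ∈ T, t • y = y) ↔ (∀ v ∈ Subgroup.closure T, y ∈ v • closure st.C) := by
  constructor
  · intro h v hv
    have hvy : v • y = y := by
      refine Subgroup.closure_induction (p := fun g _ => g • y = y)
        (fun x hx => h x hx) (one_smul W y) ?_ ?_ hv
      · intro a b _ _ ha hb
        rw [mul_smul, hb, ha]
      · intro a _ ha
        calc a⁻¹ • y = a⁻¹ • (a • y) := by rw [ha]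
        _ = y := inv_smul_smul a y
    have : v • y ∈ v • closure st.C := Set.smul_mem_smul_set hy
    rwa [hvy] at this
  · intro h t ht
    have htR : t ∈ st.R := st.S_sub (hT ht)
    have hyt : y ∈ t • closure st.C := h t (Subgroup.subset_closure ht)
    -- y ∈ closure (Xm t)
    have hym : y ∈ closure (st.Xm t) := by
      have h1 : t • closure st.C ⊆ closure (t • st.C) := by
        have := (st.isom t).continuous
        simpa [Set.image_smul] using
          image_closure_subset_closure_image (f := fun x : X => t • x) this (s := st.C)
      have h2 : t • st.C ⊆ st.Xm t := by
        rw [← st.refl_swap t htR]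
        exact Set.smul_set_mono (st.chamber_sub t htR)
      exact closure_mono h2 (h1 hyt)
    have hyp : y ∈ closure (st.Xp t) := closure_mono (st.chamber_sub t htR) hy
    obtain ⟨hXpOpen, hXmOpen⟩ := st.halves_open htR
    by_contra hne
    have hycomp : y ∈ ({x : X | t • x = x}ᶜ : Set X) := hne
    rw [← st.half_union t htR] at hycomp
    rcases hycomp with hyP | hyM
    · obtain ⟨z, hz⟩ := mem_closure_iff.mp hym (st.Xp t) hXpOpen hyP
      exact (st.half_disj t htR).ne_of_mem hz.1 hz.2 rfl
    · obtain ⟨z, hz⟩ := mem_closure_iff.mp hyp (st.Xm t) hXmOpen hyM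
      exact (st.half_disj t htR).ne_of_mem hz.2 hz.1 rfl
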